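/- Suppose condition (★) holds. Let A be the quotient of the free algebra on generators X_1, …, X_n, Y (i.e. FreeAlgebra 𝕜 (Fin n ⊕ Unit)) by the two-sided ideal generated by all elements X_i * X_j + μ i j • (X_j * X_i) − (2 * B i j) • Y for i, j ∈ Fin n, together with the elements Y * X_i − X_i * Y for all i. Then the image of Y in A is a regular element, i.e. it is neither a left nor a right zero divisor. (Section 5: since gr(R) ≅ Λ_μ(V), y is a regular element of the homogenization A.) -/

import Mathlib

open FreeAlgebra

/-- `μ` is multiplicatively antisymmetric: `μ i j * μ j i = 1` and `μ i i = 1`. -/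
def MulAntisym {𝕜 : Type*} [Field 𝕜] {n : ℕ} (μ : Fin n → Fin n → 𝕜) : Prop :=
  ∀ i j, μ i j * μ j i = 1 ∧ μ i i = 1

/-- `B` is `μ`-symmetric: `B i j = μ i j * B j i`. -/
def MuSymm {𝕜 : Type*} [Field 𝕜] {n : ℕ} (μ B : Fin n → Fin n → 𝕜) : Prop :=
  ∀ i j, B i j = μ i j * B j i

/-- Condition (★): for all `i, j` with `B i j ≠ 0`, one has `μ i k = μ k j` for all `k`. -/
def StarCond {𝕜 : Type*} [Field 𝕜] {n : ℕ} (μ B : Fin n → Fin n → 𝕜) : Prop :=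
  ∀ i j, B i j ≠ 0 → ∀ k, μ i k = μ k j

/-- The defining relations of the skew Clifford algebra: identifying
`x_i x_j + μ i j • (x_j x_i)` with `(2 * B i j) • 1`, which amounts to quotienting the free
algebra by the two-sided ideal generated by
`x_i x_j + μ i j • (x_j x_i) - (2 * B i j) • 1`. -/
inductive sClRel (𝕜 : Type*) [Field 𝕜] (n : ℕ) (μ B : Fin n → Fin n → 𝕜) :
    FreeAlgebra 𝕜 (Fin n) → FreeAlgebra 𝕜 (Fin n) → Prop
  | rel (i j : Fin n) : sClRel 𝕜 n μ B
      (ι 𝕜 i * ι 𝕜 j + μ i j • (ι 𝕜 j * ι 𝕜 i))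
      ((2 * B i j) • (1 : FreeAlgebra 𝕜 (Fin n)))

/-- The skew Clifford algebra `sCl(μ, B)`. -/
abbrev sCl (𝕜 : Type*) [Field 𝕜] (n : ℕ) (μ B : Fin n → Fin n → 𝕜) : Type _ :=
  RingQuot (sClRel 𝕜 n μ B)

/-- The image `x̄_i` of the generator `x_i` in the skew Clifford algebra. -/
noncomputable def sClGen (𝕜 : Type*) [Field 𝕜] (n : ℕ) (μ B : Fin n → Fin n → 𝕜)
    (i : Fin n) : sCl 𝕜 n μ B :=
  RingQuot.mkAlgHom 𝕜 (sClRel 𝕜 n μ B) (ι 𝕜 i)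
/-- The defining relations of the homogenization `A` of `sCl(μ, B)`: the quadratic
relations `X_i X_j + μ i j • (X_j X_i) = (2 * B i j) • Y`, together with relations making
`Y` central. -/
inductive HomogRel (𝕜 : Type*) [Field 𝕜] (n : ℕ) (μ B : Fin n → Fin n → 𝕜) :
    FreeAlgebra 𝕜 (Fin n ⊕ Unit) → FreeAlgebra 𝕜 (Fin n ⊕ Unit) → Prop
  | rel (i j : Fin n) : HomogRel 𝕜 n μ B
      (ι 𝕜 (Sum.inl i) * ι 𝕜 (Sum.inl j) + μ i j • (ι 𝕜 (Sum.inl j) * ι 𝕜 (Sum.inl i)))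
      ((2 * B i j) • ι 𝕜 (Sum.inr ()))
  | central (i : Fin n) : HomogRel 𝕜 n μ B
      (ι 𝕜 (Sum.inr ()) * ι 𝕜 (Sum.inl i)) (ι 𝕜 (Sum.inl i) * ι 𝕜 (Sum.inr ()))

/-!
A normal-form argument. The free `𝕜[y]`-module on the subsets `S` of `Fin n` models the span of the
ordered monomials `x_S y^m`. Left multiplication by `x_i` is defined on `x_S` by moving `x_i` past
the smaller generators with `x_i x_k = -μ i k x_k x_i + 2 B i k y`, and condition (★) is
what makes these operators satisfy the defining relations of `A`. Thus `A` acts on the module, with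
`y` acting as multiplication by the polynomial variable, which is injective. Evaluating normal forms
in `A` is a left inverse of `a ↦ a • 1`, so `y a = 0` forces `a = 0`; as `y` is central, so does
`a y = 0`.
-/

noncomputable section

lemma StarCond.mul_eq {𝕜 : Type*} [Field 𝕜] {n : ℕ} {μ B : Fin n → Fin n → 𝕜}
    (h : StarCond μ B) (i j k : Fin n) : B i j * μ i k = B i j * μ k j := by
  by_cases hij : B i j = 0
  · simp [hij]
  · rw [h i j hij k]

namespace Homogenization

open Polynomial

variable {𝕜 : Type*} [Field 𝕜] {n : ℕ}

/-- `Finsupp.single S p` stands for `x_S * p(y)`, where `x_S` is the product of the generators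
indexed by `S` in increasing order. -/
abbrev NormalForms (𝕜 : Type*) [Field 𝕜] (n : ℕ) := Finset (Fin n) →₀ 𝕜[X]

def mono (S : Finset (Fin n)) : NormalForms 𝕜 n := Finsupp.single S 1

def wedge (k : Fin n) : Module.End 𝕜[X] (NormalForms 𝕜 n) :=
  Finsupp.lmapDomain 𝕜[X] 𝕜[X] (insert k)

def mulY : Module.End 𝕜[X] (NormalForms 𝕜 n) := algebraMap 𝕜[X] _ X

def above (k : Fin n) : Submodule 𝕜[X] (NormalForms 𝕜 n) :=
  Finsupp.supported 𝕜[X] 𝕜[X] {S | ∀ x ∈ S, k < x}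

lemma wedge_mono (k : Fin n) (S : Finset (Fin n)) :
    wedge k (mono S : NormalForms 𝕜 n) = mono (insert k S) := by
  simp [wedge, mono]

lemma map_mulY (f : Module.End 𝕜[X] (NormalForms 𝕜 n)) (v : NormalForms 𝕜 n) :
    f (mulY v) = mulY (f v) := by
  simp [mulY]

lemma mulY_injective : Function.Injective (mulY : Module.End 𝕜[X] (NormalForms 𝕜 n)) :=
  fun _ _ h => smul_right_injective _ (X_ne_zero (R := 𝕜)) h

lemma mulY_mem {k : Fin n} {w : NormalForms 𝕜 n} (hw : w ∈ above k) : mulY w ∈ above k :=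
  (above k).smul_mem X hw

lemma mono_mem_above {k : Fin n} {S : Finset (Fin n)} (h : ∀ x ∈ S, k < x) :
    (mono S : NormalForms 𝕜 n) ∈ above k :=
  Finsupp.single_mem_supported 𝕜[X] 1 h

lemma above_le_above {i k : Fin n} (h : i < k) :
    (above k : Submodule 𝕜[X] (NormalForms 𝕜 n)) ≤ above i :=
  Finsupp.supported_mono fun _ hS x hx => h.trans (hS x hx)

lemma eqOn_above {k : Fin n} {f g : Module.End 𝕜[X] (NormalForms 𝕜 n)}
    (h : ∀ S : Finset (Fin n), (∀ x ∈ S, k < x) → f (mono S) = g (mono S)) :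
    Set.EqOn f g (above k : Submodule 𝕜[X] (NormalForms 𝕜 n)) := by
  rw [above, Finsupp.supported_eq_span_single]
  exact LinearMap.eqOn_span' (by rintro _ ⟨S, hS, rfl⟩; exact h S hS)

lemma map_mem_above {k : Fin n} {f : Module.End 𝕜[X] (NormalForms 𝕜 n)}
    (h : ∀ S : Finset (Fin n), (∀ x ∈ S, k < x) → f (mono S) ∈ above k)
    {w : NormalForms 𝕜 n} (hw : w ∈ above k) : f w ∈ above k := by
  have hmap : (above k).map f ≤ above k := by
    nth_rw 1 [above]
    rw [Finsupp.supported_eq_span_single, Submodule.map_span_le]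
    rintro _ ⟨S, hS, rfl⟩
    exact h S hS
  exact hmap ⟨w, hw, rfl⟩

lemma wedge_mem_above {k k' : Fin n} (h : k < k') {w : NormalForms 𝕜 n} (hw : w ∈ above k) :
    wedge k' w ∈ above k := by
  refine map_mem_above (fun S hS => ?_) hw
  rw [wedge_mono]
  exact mono_mem_above ((Finset.forall_mem_insert _ _ _).2 ⟨h, hS⟩)

lemma sort_insert_of_forall_lt {k : Fin n} {T : Finset (Fin n)} (h : ∀ x ∈ T, k < x) :
    (insert k T).sort (· ≤ ·) = k :: T.sort (· ≤ ·) :=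
  Finset.sort_insert (· ≤ ·) (fun b hb => (h b hb).le) (fun hk => lt_irrefl k (h k hk))

variable (μ B : Fin n → Fin n → 𝕜)

/-- Left multiplication by `x_i` on the normal monomial `x_L`, for `L` increasing. -/
def mulXList (i : Fin n) : List (Fin n) → NormalForms 𝕜 n
  | [] => mono {i}
  | k :: L =>
    if i < k then mono (insert i (insert k L.toFinset))
    else if i = k then B i i • mulY (mono L.toFinset)
    else -μ i k • wedge k (mulXList i L) + (2 * B i k) • mulY (mono L.toFinset)

def mulX (i : Fin n) : Module.End 𝕜[X] (NormalForms 𝕜 n) :=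
  Finsupp.linearCombination 𝕜[X] fun S => mulXList μ B i (S.sort (· ≤ ·))

lemma mulX_mono (i : Fin n) (S : Finset (Fin n)) :
    mulX μ B i (mono S) = mulXList μ B i (S.sort (· ≤ ·)) := by
  simp [mulX, mono]

lemma mulX_mono_insert {i k : Fin n} {T : Finset (Fin n)} (h : ∀ x ∈ T, k < x) :
    mulX μ B i (mono (insert k T)) =
      if i < k then mono (insert i (insert k T))
      else if i = k then B i i • mulY (mono T)
      else -μ i k • wedge k (mulX μ B i (mono T)) + (2 * B i k) • mulY (mono T) := by
  rw [mulX_mono, sort_insert_of_forall_lt h, mulXList, Finset.sort_toFinset, mulX_mono]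

lemma mulX_mono_of_forall_lt {i : Fin n} {S : Finset (Fin n)} (h : ∀ x ∈ S, i < x) :
    mulX μ B i (mono S) = mono (insert i S) := by
  induction S using Finset.induction_on_min with
  | empty => simp [mulX_mono, mulXList]
  | insert k T hT _ =>
    rw [mulX_mono_insert μ B hT, if_pos (h k (Finset.mem_insert_self k T))]

lemma mulX_of_mem_above {i : Fin n} {w : NormalForms 𝕜 n} (hw : w ∈ above i) :
    mulX μ B i w = wedge i w :=
  eqOn_above (fun S hS => by rw [mulX_mono_of_forall_lt μ B hS, wedge_mono]) hw

lemma mulX_wedge_self {k : Fin n} {w : NormalForms 𝕜 n} (hw : w ∈ above k) :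
    mulX μ B k (wedge k w) = B k k • mulY w := by
  refine eqOn_above (f := mulX μ B k * wedge k) (g := B k k • mulY) (fun S hS => ?_) hw
  simp [wedge_mono, mulX_mono_insert μ B hS]

lemma mulX_wedge_of_lt {i k : Fin n} (hki : k < i) {w : NormalForms 𝕜 n} (hw : w ∈ above k) :
    mulX μ B i (wedge k w) = -μ i k • wedge k (mulX μ B i w) + (2 * B i k) • mulY w := by
  refine eqOn_above (f := mulX μ B i * wedge k)
    (g := -μ i k • (wedge k * mulX μ B i) + (2 * B i k) • mulY) (fun S hS => ?_) hw
  simp [wedge_mono, mulX_mono_insert μ B hS, hki.not_gt, hki.ne']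

lemma mulX_mem_above {i k : Fin n} (hki : k < i) {w : NormalForms 𝕜 n} (hw : w ∈ above k) :
    mulX μ B i w ∈ above k := by
  refine map_mem_above (fun S hS => ?_) hw
  induction S using Finset.induction_on_min with
  | empty =>
    rw [mulX_mono_of_forall_lt μ B (by simp)]
    exact mono_mem_above (by simpa using hki)
  | insert k' T hT ih =>
    have hTk : ∀ x ∈ T, k < x := fun x hx => hS x (Finset.mem_insert_of_mem hx)
    have hyT := mulY_mem (mono_mem_above (𝕜 := 𝕜) hTk)
    rw [mulX_mono_insert μ B hT]
    split_ifs
    · exact mono_mem_above ((Finset.forall_mem_insert _ _ _).2 ⟨hki, hS⟩)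
    · exact (above k).smul_of_tower_mem _ hyT
    · have hk' := hS k' (Finset.mem_insert_self k' T)
      exact add_mem ((above k).smul_of_tower_mem _ (wedge_mem_above hk' (ih hTk)))
        ((above k).smul_of_tower_mem _ hyT)

lemma ext_mono {f g : Module.End 𝕜[X] (NormalForms 𝕜 n)} (h : ∀ S, f (mono S) = g (mono S)) :
    f = g :=
  Finsupp.lhom_ext' fun S => LinearMap.ext_ring (h S)

variable {μ B}

lemma mulX_mulX_self_mono (hμ : MulAntisym μ) (hstar : StarCond μ B) (i : Fin n)
    (S : Finset (Fin n)) : mulX μ B i (mulX μ B i (mono S)) = B i i • mulY (mono S) := by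
  have of_mem : ∀ {w : NormalForms 𝕜 n}, w ∈ above i →
      mulX μ B i (mulX μ B i w) = B i i • mulY w :=
    fun hw => by rw [mulX_of_mem_above μ B hw, mulX_wedge_self μ B hw]
  induction S using Finset.induction_on_min with
  | empty => exact of_mem (mono_mem_above (by simp))
  | insert k T hT ih =>
    have hTk := mono_mem_above (𝕜 := 𝕜) hT
    rw [← wedge_mono]
    rcases lt_trichotomy i k with hik | rfl | hki
    · exact of_mem (wedge_mem_above hik (above_le_above hik hTk))
    · rw [mulX_wedge_self μ B hTk, LinearMap.map_smul_of_tower, map_mulY,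
        mulX_of_mem_above μ B hTk]
    · rw [mulX_wedge_of_lt μ B hki hTk]
      simp only [map_add, LinearMap.map_smul_of_tower, map_mulY]
      rw [mulX_wedge_of_lt μ B hki (mulX_mem_above μ B hki hTk), ih]
      simp only [LinearMap.map_smul_of_tower, map_mulY]
      match_scalars
      · linear_combination μ i k * hstar.mul_eq i i k + B i i * (hμ i k).1
      · linear_combination 2 * hstar.mul_eq i k i - 2 * B i k * (hμ i i).2

variable (μ B) in
def QuadRelAt (i j : Fin n) (w : NormalForms 𝕜 n) : Prop :=
  mulX μ B i (mulX μ B j w) + μ i j • mulX μ B j (mulX μ B i w) = (2 * B i j) • mulY w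

variable {i j k : Fin n} {w : NormalForms 𝕜 n}

lemma quadRelAt_of_mem_above (hμ : MulAntisym μ) (hB : MuSymm μ B) (hij : i < j)
    (hw : w ∈ above j) : QuadRelAt μ B i j w := by
  have hwi := above_le_above hij hw
  rw [QuadRelAt, mulX_of_mem_above μ B hw, mulX_of_mem_above μ B (wedge_mem_above hij hwi),
    mulX_of_mem_above μ B hwi, mulX_wedge_of_lt μ B hij hwi, mulX_of_mem_above μ B hw]
  match_scalars
  · linear_combination -(hμ i j).1
  · linear_combination -2 * hB i j

lemma quadRelAt_wedge_right (hμ : MulAntisym μ) (hB : MuSymm μ B) (hij : i < j)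
    (hw : w ∈ above j) : QuadRelAt μ B i j (wedge j w) := by
  have hwi := above_le_above hij hw
  have hjwi := wedge_mem_above hij hwi
  rw [QuadRelAt, mulX_of_mem_above μ B hjwi, mulX_wedge_of_lt μ B hij hjwi,
    mulX_wedge_self μ B hw]
  simp only [LinearMap.map_smul_of_tower, map_mulY]
  rw [mulX_of_mem_above μ B hwi]
  match_scalars
  · linear_combination -B j j * (hμ i j).1
  · linear_combination -2 * hB i j

lemma quadRelAt_wedge_between (hμ : MulAntisym μ) (hB : MuSymm μ B) (hik : i < k)
    (hkj : k < j) (hw : w ∈ above k) : QuadRelAt μ B i j (wedge k w) := by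
  have hwi := above_le_above hik hw
  have hkwi := wedge_mem_above hik hwi
  have hkjwi := wedge_mem_above hik (above_le_above hik (mulX_mem_above μ B hkj hw))
  rw [QuadRelAt, mulX_of_mem_above μ B hkwi, mulX_wedge_of_lt μ B (hik.trans hkj) hkwi,
    mulX_wedge_of_lt μ B hkj hw]
  simp only [map_add, LinearMap.map_smul_of_tower, map_mulY]
  rw [mulX_of_mem_above μ B hkjwi, mulX_of_mem_above μ B hwi]
  match_scalars
  · linear_combination μ j k * (hμ i j).1
  · linear_combination -2 * B j k * (hμ i j).1
  · linear_combination -2 * hB i j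

lemma quadRelAt_wedge_left (hμ : MulAntisym μ) (hB : MuSymm μ B) (hstar : StarCond μ B)
    (hij : i < j) (hw : w ∈ above i) : QuadRelAt μ B i j (wedge i w) := by
  rw [QuadRelAt, mulX_wedge_of_lt μ B hij hw, mulX_wedge_self μ B hw]
  simp only [map_add, LinearMap.map_smul_of_tower, map_mulY]
  rw [mulX_wedge_self μ B (mulX_mem_above μ B hij hw), mulX_of_mem_above μ B hw]
  match_scalars
  · linear_combination hstar.mul_eq i i j
  · linear_combination 2 * hB j i + 2 * B i j * (hμ i j).1 + 2 * μ j i * hstar.mul_eq i j i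
      - 2 * μ j i * B i j * (hμ i i).2

lemma quadRelAt_wedge_of_lt (hμ : MulAntisym μ) (hstar : StarCond μ B) (hki : k < i)
    (hij : i < j) (hw : w ∈ above k) (h : QuadRelAt μ B i j w) :
    QuadRelAt μ B i j (wedge k w) := by
  rw [QuadRelAt] at h ⊢
  rw [mulX_wedge_of_lt μ B hki hw, mulX_wedge_of_lt μ B (hki.trans hij) hw]
  simp only [map_add, LinearMap.map_smul_of_tower, map_mulY]
  rw [mulX_wedge_of_lt μ B hki (mulX_mem_above μ B (hki.trans hij) hw),
    mulX_wedge_of_lt μ B (hki.trans hij) (mulX_mem_above μ B hki hw)]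
  have h' := congrArg (wedge k) h
  simp only [map_add, LinearMap.map_smul_of_tower, map_mulY] at h'
  linear_combination (norm := skip) (μ j k * μ i k) • h'
  match_scalars
  · ring
  · linear_combination 2 * hstar.mul_eq i k j
  · linear_combination 2 * μ i j * hstar.mul_eq j k i - 2 * B j k * (hμ i j).1
  · ring
  · linear_combination 2 * μ j k * hstar.mul_eq i j k + 2 * B i j * (hμ j k).1

lemma quadRelAt_mono (hμ : MulAntisym μ) (hB : MuSymm μ B) (hstar : StarCond μ B)
    (hij : i < j) (S : Finset (Fin n)) : QuadRelAt μ B i j (mono S) := by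
  induction S using Finset.induction_on_min with
  | empty => exact quadRelAt_of_mem_above hμ hB hij (mono_mem_above (by simp))
  | insert k T hT ih =>
    have hTk := mono_mem_above (𝕜 := 𝕜) hT
    rw [← wedge_mono]
    rcases lt_trichotomy j k with hjk | rfl | hkj
    · exact quadRelAt_of_mem_above hμ hB hij (wedge_mem_above hjk (above_le_above hjk hTk))
    · exact quadRelAt_wedge_right hμ hB hij hTk
    · rcases lt_trichotomy i k with hik | rfl | hki
      · exact quadRelAt_wedge_between hμ hB hik hkj hTk
      · exact quadRelAt_wedge_left hμ hB hstar hkj hTk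
      · exact quadRelAt_wedge_of_lt hμ hstar hki hij hTk ih

lemma mulX_mul_mulX_add (hμ : MulAntisym μ) (hB : MuSymm μ B) (hstar : StarCond μ B)
    (i j : Fin n) :
    mulX μ B i * mulX μ B j + μ i j • (mulX μ B j * mulX μ B i) = (2 * B i j) • mulY := by
  have of_lt : ∀ {i j : Fin n}, i < j →
      mulX μ B i * mulX μ B j + μ i j • (mulX μ B j * mulX μ B i) = (2 * B i j) • mulY :=
    fun hij => ext_mono fun S => quadRelAt_mono hμ hB hstar hij S
  rcases lt_trichotomy i j with hij | rfl | hji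
  · exact of_lt hij
  · have hsq : mulX μ B i * mulX μ B i = B i i • mulY :=
      ext_mono fun S => mulX_mulX_self_mono hμ hstar i S
    rw [hsq, (hμ i i).2, one_smul, ← two_smul 𝕜, smul_smul]
  · calc _ = μ i j • (mulX μ B j * mulX μ B i + μ j i • (mulX μ B i * mulX μ B j)) := by
          rw [smul_add, smul_smul, (hμ i j).1, one_smul, add_comm]
      _ = _ := by rw [of_lt hji, smul_smul, hB i j, mul_left_comm]

variable (μ B)

def genX (i : Fin n) : RingQuot (HomogRel 𝕜 n μ B) :=
  RingQuot.mkAlgHom 𝕜 (HomogRel 𝕜 n μ B) (ι 𝕜 (Sum.inl i))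

def genY : RingQuot (HomogRel 𝕜 n μ B) :=
  RingQuot.mkAlgHom 𝕜 (HomogRel 𝕜 n μ B) (ι 𝕜 (Sum.inr ()))

def orderedMonomial (S : Finset (Fin n)) : RingQuot (HomogRel 𝕜 n μ B) :=
  ((S.sort (· ≤ ·)).map (genX μ B)).prod

lemma genX_mul_genX_add (i j : Fin n) :
    genX μ B i * genX μ B j + μ i j • (genX μ B j * genX μ B i) = (2 * B i j) • genY μ B := by
  have h := RingQuot.mkAlgHom_rel 𝕜 (HomogRel.rel (𝕜 := 𝕜) (μ := μ) (B := B) i j)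
  rwa [map_add, map_mul, map_smul, map_mul, map_smul] at h

lemma commute_genY (a : RingQuot (HomogRel 𝕜 n μ B)) : Commute (genY μ B) a := by
  obtain ⟨f, rfl⟩ := RingQuot.mkAlgHom_surjective 𝕜 (HomogRel 𝕜 n μ B) a
  induction f using FreeAlgebra.induction with
  | grade0 r => rw [AlgHom.commutes]; exact Algebra.commute_algebraMap_right r _
  | grade1 x =>
    rcases x with i | ⟨⟩
    · have h := RingQuot.mkAlgHom_rel 𝕜 (HomogRel.central (𝕜 := 𝕜) (μ := μ) (B := B) i)
      rw [map_mul, map_mul] at h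
      exact h
    · exact Commute.refl _
  | mul a b ha hb => rw [map_mul]; exact ha.mul_right hb
  | add a b ha hb => rw [map_add]; exact ha.add_right hb

variable {μ B}

lemma genX_mul_self (hchar : (2 : 𝕜) ≠ 0) (hμ : MulAntisym μ) (i : Fin n) :
    genX μ B i * genX μ B i = B i i • genY μ B := by
  have h := genX_mul_genX_add μ B i i
  rw [(hμ i i).2, one_smul, ← two_smul 𝕜, mul_smul] at h
  exact smul_right_injective _ hchar h

lemma orderedMonomial_insert {k : Fin n} {T : Finset (Fin n)} (h : ∀ x ∈ T, k < x) :
    orderedMonomial μ B (insert k T) = genX μ B k * orderedMonomial μ B T := by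
  rw [orderedMonomial, sort_insert_of_forall_lt h, List.map_cons, List.prod_cons,
    orderedMonomial]

variable (μ B)

def evalNormalForm : NormalForms 𝕜 n →ₗ[𝕜] RingQuot (HomogRel 𝕜 n μ B) :=
  Finsupp.lsum 𝕜 fun S =>
    LinearMap.mulLeft 𝕜 (orderedMonomial μ B S) ∘ₗ (aeval (genY μ B)).toLinearMap

lemma evalNormalForm_single (S : Finset (Fin n)) (p : 𝕜[X]) :
    evalNormalForm μ B (Finsupp.single S p) = orderedMonomial μ B S * aeval (genY μ B) p := by
  simp [evalNormalForm]

lemma evalNormalForm_mono (S : Finset (Fin n)) :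
    evalNormalForm μ B (mono S) = orderedMonomial μ B S := by
  rw [mono, evalNormalForm_single, map_one, mul_one]

lemma evalNormalForm_smul (p : 𝕜[X]) (v : NormalForms 𝕜 n) :
    evalNormalForm μ B (p • v) = evalNormalForm μ B v * aeval (genY μ B) p := by
  induction v using Finsupp.induction_linear with
  | zero => simp
  | add f g hf hg => rw [smul_add, map_add, map_add, hf, hg, add_mul]
  | single S q =>
    rw [Finsupp.smul_single, smul_eq_mul, evalNormalForm_single, evalNormalForm_single, mul_comm,
      map_mul, mul_assoc]

lemma evalNormalForm_mulY (v : NormalForms 𝕜 n) :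
    evalNormalForm μ B (mulY v) = genY μ B * evalNormalForm μ B v := by
  rw [mulY, Module.algebraMap_end_apply, evalNormalForm_smul, aeval_X, (commute_genY μ B _).eq]

lemma evalNormalForm_wedge {k : Fin n} {w : NormalForms 𝕜 n} (hw : w ∈ above k) :
    evalNormalForm μ B (wedge k w) = genX μ B k * evalNormalForm μ B w := by
  rw [above, Finsupp.supported_eq_span_single] at hw
  induction hw using Submodule.span_induction with
  | mem _ h =>
    obtain ⟨S, hS, rfl⟩ := h
    change evalNormalForm μ B (wedge k (mono S)) = genX μ B k * evalNormalForm μ B (mono S)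
    rw [wedge_mono, evalNormalForm_mono, evalNormalForm_mono, orderedMonomial_insert hS]
  | zero => simp
  | add _ _ _ _ h₁ h₂ => rw [map_add, map_add, map_add, h₁, h₂, mul_add]
  | smul p _ _ h => rw [map_smul, evalNormalForm_smul, evalNormalForm_smul, h, mul_assoc]

variable {μ B}

lemma evalNormalForm_mulX_mono (hchar : (2 : 𝕜) ≠ 0) (hμ : MulAntisym μ) (i : Fin n)
    (S : Finset (Fin n)) :
    evalNormalForm μ B (mulX μ B i (mono S)) = genX μ B i * orderedMonomial μ B S := by
  have of_forall_lt : ∀ {S : Finset (Fin n)}, (∀ x ∈ S, i < x) →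
      evalNormalForm μ B (mulX μ B i (mono S)) = genX μ B i * orderedMonomial μ B S :=
    fun h => by rw [mulX_mono_of_forall_lt μ B h, evalNormalForm_mono, orderedMonomial_insert h]
  induction S using Finset.induction_on_min with
  | empty => exact of_forall_lt (by simp)
  | insert k T hT ih =>
    rcases lt_trichotomy i k with hik | rfl | hki
    · exact of_forall_lt
        ((Finset.forall_mem_insert _ _ _).2 ⟨hik, fun x hx => hik.trans (hT x hx)⟩)
    · rw [orderedMonomial_insert hT, mulX_mono_insert μ B hT, if_neg (lt_irrefl i), if_pos rfl,
        map_smul, evalNormalForm_mulY, evalNormalForm_mono, ← mul_assoc,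
        genX_mul_self hchar hμ, smul_mul_assoc]
    · rw [orderedMonomial_insert hT, mulX_mono_insert μ B hT, if_neg hki.not_gt, if_neg hki.ne',
        map_add, map_smul, map_smul,
        evalNormalForm_wedge μ B (mulX_mem_above μ B hki (mono_mem_above hT)), ih,
        evalNormalForm_mulY, evalNormalForm_mono, ← mul_assoc (genX μ B i),
        eq_sub_of_add_eq (genX_mul_genX_add μ B i k), sub_mul, smul_mul_assoc, smul_mul_assoc,
        mul_assoc]
      module

lemma evalNormalForm_mulX (hchar : (2 : 𝕜) ≠ 0) (hμ : MulAntisym μ) (i : Fin n)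
    (v : NormalForms 𝕜 n) :
    evalNormalForm μ B (mulX μ B i v) = genX μ B i * evalNormalForm μ B v := by
  induction v using Finsupp.induction_linear with
  | zero => simp
  | add f g hf hg => rw [map_add, map_add, hf, hg, map_add, mul_add]
  | single S p =>
    have hp : Finsupp.single S p = p • mono S := by rw [mono, Finsupp.smul_single_one]
    rw [hp, map_smul, evalNormalForm_smul, evalNormalForm_smul,
      evalNormalForm_mulX_mono hchar hμ, evalNormalForm_mono, mul_assoc]

def rep (hμ : MulAntisym μ) (hB : MuSymm μ B) (hstar : StarCond μ B) :
    RingQuot (HomogRel 𝕜 n μ B) →ₐ[𝕜] Module.End 𝕜[X] (NormalForms 𝕜 n) :=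
  RingQuot.liftAlgHom 𝕜 ⟨FreeAlgebra.lift 𝕜 (Sum.elim (mulX μ B) fun _ => mulY),
    fun _ _ h => by
      cases h with
      | rel i j => simpa using mulX_mul_mulX_add hμ hB hstar i j
      | central i =>
        simp only [map_mul, FreeAlgebra.lift_ι_apply, Sum.elim_inl, Sum.elim_inr]
        exact Algebra.commutes X (mulX μ B i)⟩

lemma rep_genY (hμ : MulAntisym μ) (hB : MuSymm μ B) (hstar : StarCond μ B) :
    rep hμ hB hstar (genY μ B) = mulY := by
  simp [rep, genY]

lemma evalNormalForm_rep (hchar : (2 : 𝕜) ≠ 0) (hμ : MulAntisym μ) (hB : MuSymm μ B)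
    (hstar : StarCond μ B) (a : RingQuot (HomogRel 𝕜 n μ B)) (v : NormalForms 𝕜 n) :
    evalNormalForm μ B (rep hμ hB hstar a v) = a * evalNormalForm μ B v := by
  obtain ⟨f, rfl⟩ := RingQuot.mkAlgHom_surjective 𝕜 (HomogRel 𝕜 n μ B) a
  rw [rep, RingQuot.liftAlgHom_mkAlgHom_apply]
  induction f using FreeAlgebra.induction generalizing v with
  | grade0 r =>
    rw [AlgHom.commutes, AlgHom.commutes, Module.algebraMap_end_apply, map_smul, Algebra.smul_def]
  | grade1 x =>
    rcases x with i | ⟨⟩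
    · rw [FreeAlgebra.lift_ι_apply, Sum.elim_inl, evalNormalForm_mulX hchar hμ]
      rfl
    · rw [FreeAlgebra.lift_ι_apply, Sum.elim_inr, evalNormalForm_mulY]
      rfl
  | mul a b ha hb => rw [map_mul, Module.End.mul_apply, ha, hb, map_mul, mul_assoc]
  | add a b ha hb => rw [map_add, LinearMap.add_apply, map_add, ha, hb, map_add, add_mul]

theorem eq_zero_of_genY_mul_eq_zero (hchar : (2 : 𝕜) ≠ 0) (hμ : MulAntisym μ)
    (hB : MuSymm μ B) (hstar : StarCond μ B) {a : RingQuot (HomogRel 𝕜 n μ B)}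
    (h : genY μ B * a = 0) : a = 0 := by
  have hv : mulY (rep hμ hB hstar a (mono ∅)) = mulY 0 := by
    simpa [rep_genY] using congrArg (fun b => rep hμ hB hstar b (mono ∅)) h
  calc a = evalNormalForm μ B (rep hμ hB hstar a (mono ∅)) := by
        simp [evalNormalForm_rep hchar, evalNormalForm_mono, orderedMonomial]
    _ = 0 := by rw [mulY_injective hv, map_zero]

end Homogenization

end

theorem homogenization_y_regular_general
    (𝕜 : Type*) [Field 𝕜] (hchar : (2 : 𝕜) ≠ 0) (n : ℕ)
    (μ B : Fin n → Fin n → 𝕜) (hμ : MulAntisym μ) (hB : MuSymm μ B)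
    (hstar : StarCond μ B) :
    (∀ a : RingQuot (HomogRel 𝕜 n μ B),
        RingQuot.mkAlgHom 𝕜 (HomogRel 𝕜 n μ B) (ι 𝕜 (Sum.inr ())) * a = 0 → a = 0) ∧
    (∀ a : RingQuot (HomogRel 𝕜 n μ B),
        a * RingQuot.mkAlgHom 𝕜 (HomogRel 𝕜 n μ B) (ι 𝕜 (Sum.inr ())) = 0 → a = 0) := by
  have left (a : RingQuot (HomogRel 𝕜 n μ B)) : Homogenization.genY μ B * a = 0 → a = 0 :=
    Homogenization.eq_zero_of_genY_mul_eq_zero hchar hμ hB hstar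
  exact ⟨left, fun a ha => left a ((Homogenization.commute_genY μ B a).eq.trans ha)⟩

/-- Section 5: if `sCl(μ, B)` has full dimension (condition (★)), then the image of the
central degree-two generator `y` is a regular element of the homogenization `A`,
i.e. neither a left nor a right zero divisor. -/
theorem homogenization_y_regular
    (𝕜 : Type*) [Field 𝕜] (hchar : (2 : 𝕜) ≠ 0) (n : ℕ) (hn : 1 ≤ n)
    (μ B : Fin n → Fin n → 𝕜) (hμ : MulAntisym μ) (hB : MuSymm μ B)
    (hstar : StarCond μ B) :
    (∀ a : RingQuot (HomogRel 𝕜 n μ B),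
        RingQuot.mkAlgHom 𝕜 (HomogRel 𝕜 n μ B) (ι 𝕜 (Sum.inr ())) * a = 0 → a = 0) ∧
    (∀ a : RingQuot (HomogRel 𝕜 n μ B),
        a * RingQuot.mkAlgHom 𝕜 (HomogRel 𝕜 n μ B) (ι 𝕜 (Sum.inr ())) = 0 → a = 0) :=
  homogenization_y_regular_general 𝕜 hchar n μ B hμ hB hstar
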